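/- (x₁-part of Theorem 2, verification form.) Fix a > b > 0 and 𝔥 > 0, set h = √𝔥, and let δ, α, β be the ridge constants. Let g : I → ℝ be differentiable on an interval I with g′(p)² = 4g(p)³ − αg(p) − β and g(p) + δ − a > 0 for all p ∈ I, and let 𝔭 : J → I be differentiable with 𝔭̇(t) = 1/(h·(g(𝔭(t)) + δ)) for all t ∈ J (this is the derivative relation defined by the transcendental equation t/h = δ(𝔭 − 𝔭₀) − ζ(𝔭) + ζ(𝔭₀)). Then x₁(t) := −√(g(𝔭(t)) + δ − a) satisfies (x₁(t)·ẋ₁(t))²·(x₁(t)² + a)² = (1/𝔥)·x₁(t)²·(x₁(t)² + b)·(x₁(t)² + a + (𝔥 − 1)(a − b)) for all t ∈ J. -/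
import Mathlib


/-- The ridge constant `δ = ((b − a)𝔥 + 3a − 2b)/3`. -/
noncomputable def ridgeDelta (a b 𝔥 : ℝ) : ℝ := ((b - a) * 𝔥 + 3 * a - 2 * b) / 3

/-- The ridge constant `α = (4/3)((b − a)²𝔥² − (b − a)b𝔥 + b²)`. -/
noncomputable def ridgeAlpha (a b 𝔥 : ℝ) : ℝ :=
  (4 / 3) * ((b - a) ^ 2 * 𝔥 ^ 2 - (b - a) * b * 𝔥 + b ^ 2)

/-- The ridge constant
`β = (4/27)((b − a)𝔥 + b)((b − a)𝔥 − 2b)(2(b − a)𝔥 − b)`. -/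
noncomputable def ridgeBeta (a b 𝔥 : ℝ) : ℝ :=
  (4 / 27) * ((b - a) * 𝔥 + b) * ((b - a) * 𝔥 - 2 * b) * (2 * (b - a) * 𝔥 - b)

/-- (`x₁`-part of Theorem 2, verification form.)
Fix `a > b > 0`, `𝔥 > 0`, set `h = √𝔥`, and let `δ, α, β` be the ridge
constants.  Let `g : I → ℝ` be differentiable on an interval `I` with
`g′(p)² = 4g(p)³ − αg(p) − β` and `g(p) + δ − a > 0` on `I`, and let
`𝔭 : J → I` be differentiable with `𝔭̇(t) = 1/(h·(g(𝔭(t)) + δ))` (the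
derivative relation defined by the transcendental equation
`t/h = δ(𝔭 − 𝔭₀) − ζ(𝔭) + ζ(𝔭₀)`).  Then `x₁(t) := −√(g(𝔭(t)) + δ − a)`
satisfies `(x₁ẋ₁)²(x₁² + a)² = (1/𝔥)·x₁²·(x₁² + b)·(x₁² + a + (𝔥 − 1)(a − b))`
on `J`. -/
theorem ridge_x1_verification
    (a b 𝔥 h : ℝ) (hb : 0 < b) (hab : b < a) (h𝔥 : 0 < 𝔥)
    (hh : h = Real.sqrt 𝔥)
    (I J : Set ℝ) (hI : I.OrdConnected) (hJ : J.OrdConnected)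
    (g : ℝ → ℝ)
    (hgdiff : ∀ p ∈ I, DifferentiableAt ℝ g p)
    (hgode : ∀ p ∈ I,
      (deriv g p) ^ 2 = 4 * (g p) ^ 3 - ridgeAlpha a b 𝔥 * g p - ridgeBeta a b 𝔥)
    (hgpos : ∀ p ∈ I, 0 < g p + ridgeDelta a b 𝔥 - a)
    (𝔭 : ℝ → ℝ) (h𝔭mem : ∀ t ∈ J, 𝔭 t ∈ I)
    (h𝔭 : ∀ t ∈ J, HasDerivAt 𝔭 (1 / (h * (g (𝔭 t) + ridgeDelta a b 𝔥))) t) :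
    let x₁ : ℝ → ℝ := fun s => -Real.sqrt (g (𝔭 s) + ridgeDelta a b 𝔥 - a)
    ∀ t ∈ J,
      (x₁ t * deriv x₁ t) ^ 2 * (x₁ t ^ 2 + a) ^ 2
        = (1 / 𝔥) * x₁ t ^ 2 * (x₁ t ^ 2 + b) * (x₁ t ^ 2 + a + (𝔥 - 1) * (a - b)) := by
  intro x₁ t ht
  set δ := ridgeDelta a b 𝔥 with hδ
  have hp : 𝔭 t ∈ I := h𝔭mem t ht
  have hupos : 0 < g (𝔭 t) + δ - a := hgpos _ hp
  set u : ℝ := g (𝔭 t) + δ - a with hu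
  have hune : u ≠ 0 := ne_of_gt hupos
  -- derivative of g ∘ 𝔭 then sqrt
  have hg' : HasDerivAt g (deriv g (𝔭 t)) (𝔭 t) := (hgdiff _ hp).hasDerivAt
  have hcomp : HasDerivAt (fun s => g (𝔭 s) + δ - a)
      (deriv g (𝔭 t) * (1 / (h * (g (𝔭 t) + δ)))) t := by
    have := (hg'.comp t (h𝔭 t ht)).add_const δ
    simpa [Function.comp] using this.sub_const a
  have hsq : HasDerivAt (fun s => Real.sqrt (g (𝔭 s) + δ - a))
      ((deriv g (𝔭 t) * (1 / (h * (g (𝔭 t) + δ)))) / (2 * Real.sqrt u)) t :=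
    hcomp.sqrt hune
  have hx1 : HasDerivAt x₁
      (-((deriv g (𝔭 t) * (1 / (h * (g (𝔭 t) + δ)))) / (2 * Real.sqrt u))) t := hsq.neg
  have hdx : deriv x₁ t = -((deriv g (𝔭 t) * (1 / (h * (g (𝔭 t) + δ)))) / (2 * Real.sqrt u)) :=
    hx1.deriv
  have hsqrtpos : 0 < Real.sqrt u := Real.sqrt_pos.mpr hupos
  have hsqu : Real.sqrt u ^ 2 = u := Real.sq_sqrt hupos.le
  have hx1sq : x₁ t ^ 2 = u := by simpa [x₁] using hsqu
  have hh2 : h ^ 2 = 𝔥 := by rw [hh]; exact Real.sq_sqrt h𝔥.le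
  have hga : g (𝔭 t) + δ = u + a := by ring
  have huane : u + a ≠ 0 := by nlinarith
  have hgane : g (𝔭 t) + δ ≠ 0 := hga ▸ huane
  have hhne : h ≠ 0 := by
    have : 0 < h := hh ▸ Real.sqrt_pos.mpr h𝔥
    exact ne_of_gt this
  -- x₁ * ẋ₁ = deriv g (𝔭 t) * 𝔭' / 2
  have hprod : x₁ t * deriv x₁ t
      = deriv g (𝔭 t) * (1 / (h * (g (𝔭 t) + δ))) / 2 := by
    rw [hdx]
    show -Real.sqrt u * _ = _
    field_simp
  have hode := hgode _ hp
  have hgval : g (𝔭 t) = u + a - δ := by rw [hu]; ring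
  rw [hprod, hx1sq]
  have key : deriv g (𝔭 t) ^ 2
      = 4 * u * (u + b) * (u + a + (𝔥 - 1) * (a - b)) := by
    rw [hode, hgval, hδ, ridgeAlpha, ridgeBeta, ridgeDelta]
    ring
  have expand : (deriv g (𝔭 t) * (1 / (h * (g (𝔭 t) + δ))) / 2) ^ 2 * (u + a) ^ 2
      = deriv g (𝔭 t) ^ 2 / (4 * 𝔥) := by
    rw [hga]
    rw [← hh2]
    field_simp
    ring
  rw [expand, key]
  field_simp
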